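/- arXiv:2509.13267 — 4 statements merged into one kernel-verified Lean document; each statement's English description precedes it below -/
import Mathlib

section
/- Let k ≥ 1 and K ≥ 1 be integers, let b > 0 and ρ be real numbers with ρ ≥ k, let n : {1,…,K} → ℕ be nonnegative integer cell counts with Σ_{m=1}^K n(m) > 0, and let u : {1,…,K} → ℝ satisfy 0 < u(m) ≤ 1 for all m. Then the function f : (0,∞) → ℝ defined by f(t) = −b·t + (ρ/k − 1)·log t + Σ_{m=1}^K ( log Γ(n(m) + t) − log Γ(t) + t·log u(m) ) is concave on (0,∞); equivalently, the density h(t) ∝ e^{−b t} t^{ρ/k−1} Γ(t)^{−K} ∏_{m=1}^K Γ(n(m)+t) u(m)^t is log-concave on (0,∞). -/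
/-!
By the functional equation `Γ(t + 1) = t Γ(t)`, the ratio `Γ(n + t) / Γ(t)` is the polynomial
`t (t + 1) ⋯ (t + n - 1)`, so `log Γ(n + t) - log Γ(t)` is a sum of the concave functions
`log (t + i)`: each cell absorbs the term `-log Γ(t)`, which on its own is convex. What remains is linear in `t`
plus `(ρ / k - 1) log t`, whose coefficient is nonnegative exactly because `ρ ≥ k`.
-/

open Real Set

theorem ConcaveOn.sum {𝕜 E β ι : Type*} [Semiring 𝕜] [PartialOrder 𝕜] [AddCommMonoid E]
    [AddCommMonoid β] [PartialOrder β] [IsOrderedAddMonoid β] [SMul 𝕜 E] [Module 𝕜 β]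
    {s : Set E} (hs : Convex 𝕜 s) {t : Finset ι} {f : ι → E → β}
    (hf : ∀ i ∈ t, ConcaveOn 𝕜 s (f i)) : ConcaveOn 𝕜 s (fun x => ∑ i ∈ t, f i x) := by
  classical
  induction t using Finset.induction_on with
  | empty => simpa using concaveOn_const (0 : β) hs
  | insert a t ha ih =>
    simp_rw [Finset.sum_insert ha]
    exact (hf a (Finset.mem_insert_self a t)).add
      (ih fun i hi => hf i (Finset.mem_insert_of_mem hi))

namespace Real

theorem log_Gamma_nat_add_sub_log_Gamma (n : ℕ) {t : ℝ} (ht : 0 < t) :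
    log (Gamma (n + t)) - log (Gamma t) = ∑ i ∈ Finset.range n, log (t + i) := by
  induction n with
  | zero => simp
  | succ n ih =>
    have hnt : 0 < (n : ℝ) + t := by positivity
    rw [Nat.cast_succ, add_right_comm, Gamma_add_one hnt.ne', log_mul hnt.ne'
      (Gamma_pos_of_pos hnt).ne', Finset.sum_range_succ, ← ih, add_comm (n : ℝ) t]
    ring

theorem concaveOn_log_add_const {c : ℝ} (hc : 0 ≤ c) :
    ConcaveOn ℝ (Ioi 0) (fun t => log (t + c)) := by
  have hsub : Ioi (0 : ℝ) ⊆ (fun z => c + z) ⁻¹' Ioi 0 := fun t ht => by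
    simp only [mem_preimage, mem_Ioi] at ht ⊢
    linarith
  exact (strictConcaveOn_log_Ioi.concaveOn.translate_left c).subset hsub (convex_Ioi 0)

theorem concaveOn_log_Gamma_nat_add_sub_log_Gamma (n : ℕ) :
    ConcaveOn ℝ (Ioi 0) (fun t => log (Gamma (n + t)) - log (Gamma t)) :=
  (ConcaveOn.sum (convex_Ioi 0) fun i _ => concaveOn_log_add_const (Nat.cast_nonneg i)).congr
    fun _ ht => (log_Gamma_nat_add_sub_log_Gamma n ht).symm

end Real

theorem hidden_full_conditional_log_concave_general
    (k K : ℕ) (hk : 1 ≤ k)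
    (b ρ : ℝ) (hρ : (k : ℝ) ≤ ρ)
    (n : Fin K → ℕ)
    (u : Fin K → ℝ) :
    ConcaveOn ℝ (Set.Ioi (0 : ℝ))
      (fun t : ℝ =>
        -b * t + (ρ / k - 1) * Real.log t +
          ∑ m, (Real.log (Real.Gamma ((n m : ℝ) + t)) - Real.log (Real.Gamma t)
            + t * Real.log (u m))) := by
  have hcoef : 0 ≤ ρ / k - 1 := by
    rwa [sub_nonneg, one_le_div₀ (by exact_mod_cast hk)]
  have hlinear : ConcaveOn ℝ (Ioi 0) (fun t => -b * t) :=
    (LinearMap.mulLeft ℝ (-b)).concaveOn (convex_Ioi 0)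
  have hlog : ConcaveOn ℝ (Ioi 0) (fun t => (ρ / k - 1) * log t) :=
    strictConcaveOn_log_Ioi.concaveOn.smul hcoef
  have hcells : ConcaveOn ℝ (Ioi 0) (fun t => ∑ m, (log (Gamma ((n m : ℝ) + t))
      - log (Gamma t) + t * log (u m))) :=
    ConcaveOn.sum (convex_Ioi 0) fun m _ => (concaveOn_log_Gamma_nat_add_sub_log_Gamma (n m)).add
      ((LinearMap.mulRight ℝ (log (u m))).concaveOn (convex_Ioi 0))
  exact (hlinear.add hlog).add hcells

/-- Theorem 2 of the paper: log-concavity of the full conditional density of a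
latent prior mean coordinate in the HiDDeN model. -/
theorem hidden_full_conditional_log_concave
    (k K : ℕ) (hk : 1 ≤ k) (hK : 1 ≤ K)
    (b ρ : ℝ) (hb : 0 < b) (hρ : (k : ℝ) ≤ ρ)
    (n : Fin K → ℕ) (hn : 0 < ∑ m, n m)
    (u : Fin K → ℝ) (hu : ∀ m, 0 < u m ∧ u m ≤ 1) :
    ConcaveOn ℝ (Set.Ioi (0 : ℝ))
      (fun t : ℝ =>
        -b * t + (ρ / k - 1) * Real.log t +
          ∑ m, (Real.log (Real.Gamma ((n m : ℝ) + t)) - Real.log (Real.Gamma t)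
            + t * Real.log (u m))) :=
  hidden_full_conditional_log_concave_general k K hk b ρ hρ n u
end

section
/- For every natural number n, the function t ↦ log Γ(t + n) − log Γ(t) is concave on the interval (0, ∞). -/
/-- `t ↦ log (t + c)` is concave on `(0, ∞)` when `c ≥ 0`. -/
lemma log_shift_concaveOn (c : ℝ) (hc : 0 ≤ c) :
    ConcaveOn ℝ (Set.Ioi (0 : ℝ)) (fun t : ℝ => Real.log (t + c)) := by
  have haff : ConcaveOn ℝ ((fun t : ℝ => t + c) ⁻¹' Set.Ioi (0 : ℝ))
      (Real.log ∘ (AffineMap.id ℝ ℝ + AffineMap.const ℝ ℝ c)) :=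
    strictConcaveOn_log_Ioi.concaveOn.comp_affineMap
      (AffineMap.id ℝ ℝ + AffineMap.const ℝ ℝ c)
  have hsub : Set.Ioi (0 : ℝ) ⊆ (fun t : ℝ => t + c) ⁻¹' Set.Ioi (0 : ℝ) := by
    intro t ht; simp only [Set.mem_preimage, Set.mem_Ioi] at *; linarith
  exact (haff.subset hsub (convex_Ioi 0)).congr (fun t ht => rfl)

/-- For every natural number `n`, the function `t ↦ log Γ(t+n) − log Γ(t)` is
concave on `(0, ∞)`. -/
theorem logGamma_ratio_concaveOn (n : ℕ) :
    ConcaveOn ℝ (Set.Ioi (0 : ℝ))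
      (fun t : ℝ => Real.log (Real.Gamma (t + n)) - Real.log (Real.Gamma t)) := by
  induction n with
  | zero =>
    have : ConcaveOn ℝ (Set.Ioi (0 : ℝ)) (fun _ : ℝ => (0 : ℝ)) :=
      concaveOn_const 0 (convex_Ioi 0)
    exact this.congr (fun t ht => by simp)
  | succ n ih =>
    have h := ih.add (log_shift_concaveOn n (by positivity))
    refine h.congr (fun t ht => ?_)
    have ht' : (0 : ℝ) < t + n := by
      have := Set.mem_Ioi.mp ht; positivity
    have : Real.Gamma (t + (n + 1 : ℕ)) = (t + n) * Real.Gamma (t + n) := by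
      have := Real.Gamma_add_one (ne_of_gt ht')
      push_cast
      rw [show t + (n + 1 : ℝ) = (t + n) + 1 by ring]
      exact this
    simp only [Pi.add_apply, this, Real.log_mul (ne_of_gt ht') (Real.Gamma_pos_of_pos ht').ne']
    ring
end

section
/- For every natural number n ≥ 1, the function t ↦ log Γ(t + n) − log Γ(t) is strictly concave on the interval (0, ∞). -/
/-!
By the functional equation, `Γ(t + n) / Γ(t) = t (t + 1) ⋯ (t + n - 1)`, so the function is
`∑_{k < n} log (t + k)`, a nonempty sum of strictly concave functions on `(0, ∞)`.
-/

open Real Set Finset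

theorem StrictConcaveOn.finset_sum {𝕜 E β ι : Type*} [Semiring 𝕜] [PartialOrder 𝕜]
    [AddCommMonoid E] [AddCommMonoid β] [PartialOrder β] [IsOrderedCancelAddMonoid β]
    [SMul 𝕜 E] [DistribMulAction 𝕜 β] {s : Set E} {t : Finset ι} {f : ι → E → β}
    (ht : t.Nonempty) (hf : ∀ i ∈ t, StrictConcaveOn 𝕜 s (f i)) :
    StrictConcaveOn 𝕜 s (fun x => ∑ i ∈ t, f i x) := by
  induction ht using Finset.Nonempty.cons_induction with
  | singleton i => simpa using hf i (mem_singleton_self i)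
  | cons i t _ _ ih =>
    simp only [Finset.sum_cons]
    exact (hf i (mem_cons_self i t)).add (ih fun j hj => hf j (mem_cons_of_mem hj))

theorem Real.strictConcaveOn_log_add {c : ℝ} (hc : 0 ≤ c) :
    StrictConcaveOn ℝ (Ioi 0) (fun t => log (t + c)) :=
  (strictConcaveOn_log_Ioi.translate_left c).subset
    (fun t (ht : 0 < t) => show 0 < c + t by linarith) (convex_Ioi 0)

theorem Real.log_Gamma_add_nat_sub_log_Gamma {t : ℝ} (ht : 0 < t) (n : ℕ) :
    log (Gamma (t + n)) - log (Gamma t) = ∑ k ∈ range n, log (t + k) := by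
  induction n with
  | zero => simp
  | succ n ih =>
    have hpos : 0 < t + n := by positivity
    rw [Nat.cast_succ, ← add_assoc, Gamma_add_one hpos.ne',
      log_mul hpos.ne' (Gamma_pos_of_pos hpos).ne', sum_range_succ, ← ih]
    ring

/-- For every natural number `n ≥ 1`, the function `t ↦ log Γ(t+n) − log Γ(t)` is
strictly concave on `(0, ∞)`. -/
theorem logGamma_ratio_strictConcaveOn (n : ℕ) (hn : 1 ≤ n) :
    StrictConcaveOn ℝ (Set.Ioi (0 : ℝ))
      (fun t : ℝ => Real.log (Real.Gamma (t + n)) - Real.log (Real.Gamma t)) :=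
  (StrictConcaveOn.finset_sum (nonempty_range_iff.2 (by omega))
      fun k _ => strictConcaveOn_log_add k.cast_nonneg).congr
    fun _ ht => (log_Gamma_add_nat_sub_log_Gamma ht n).symm
end

section
/- Let k ≥ 1 and M ≥ 1 be integers, let β > 0 be real, and let n : {1,…,M} × {1,…,k} → ℕ be cell counts such that for every x ∈ {1,…,k} there exists m ∈ {1,…,M} with n(m,x) > 0 (equivalently, every marginal count Σ_{m=1}^M n(m,x) is positive). Then the function g(ω) = −Σ_{m=1}^M Σ_{x=1}^k ( log Γ(n(m,x) + β·ω(x)) − log Γ(β·ω(x)) ) is strictly convex on the open probability simplex {ω ∈ ℝ^k : ω(x) > 0 for all x and Σ_{x=1}^k ω(x) = 1}. -/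
open Finset Real Set

/-- Gamma shift identity in log form. -/
private lemma logGamma_shift (t : ℝ) (ht : 0 < t) (N : ℕ) :
    Real.log (Real.Gamma ((N : ℝ) + t)) - Real.log (Real.Gamma t)
      = ∑ i ∈ Finset.range N, Real.log (t + i) := by
  induction N with
  | zero => simp
  | succ N ih =>
    have hnt : (0:ℝ) < (N:ℝ) + t := by positivity
    have h1 : ((N+1 : ℕ) : ℝ) + t = ((N:ℝ) + t) + 1 := by push_cast; ring
    rw [h1, Real.Gamma_add_one hnt.ne', Real.log_mul hnt.ne'
      (Real.Gamma_pos_of_pos hnt).ne', Finset.sum_range_succ, ← ih]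
    have : Real.log (t + (N:ℝ)) = Real.log ((N:ℝ) + t) := by rw [add_comm]
    rw [this]; ring

/-- Core strict inequality for each summand. -/
private lemma term_strict {β : ℝ} (hβ : 0 < β) (i : ℕ) {a b p q : ℝ}
    (ha : 0 < a) (hb : 0 < b) (hab : a ≠ b) (hp : 0 < p) (hq : 0 < q)
    (hpq : p + q = 1) :
    -Real.log (β * (p * a + q * b) + i)
      < p * (-Real.log (β * a + i)) + q * (-Real.log (β * b + i)) := by
  have hu : (β * a + (i:ℝ)) ∈ Set.Ioi (0:ℝ) := by
    have : (0:ℝ) ≤ (i:ℝ) := Nat.cast_nonneg i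
    simp only [Set.mem_Ioi]; positivity
  have hv : (β * b + (i:ℝ)) ∈ Set.Ioi (0:ℝ) := by
    have : (0:ℝ) ≤ (i:ℝ) := Nat.cast_nonneg i
    simp only [Set.mem_Ioi]; positivity
  have huv : β * a + (i:ℝ) ≠ β * b + (i:ℝ) := by
    intro h
    exact hab (mul_left_cancel₀ hβ.ne' (by linarith))
  have key := strictConcaveOn_log_Ioi.2 hu hv huv hp hq hpq
  have heq : p • (β * a + (i:ℝ)) + q • (β * b + (i:ℝ))
      = β * (p * a + q * b) + i := by
    simp only [smul_eq_mul]; linear_combination (i:ℝ) * hpq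
  rw [heq] at key
  simp only [smul_eq_mul] at key
  nlinarith [key]

/-- Transfer strict convexity along pointwise equality on the set. -/
private lemma strictConvexOn_congr {s : Set (Fin k → ℝ)} {f g : (Fin k → ℝ) → ℝ}
    (hf : StrictConvexOn ℝ s f) (h : Set.EqOn f g s) : StrictConvexOn ℝ s g := by
  refine ⟨hf.1, fun x hx y hy hxy a b ha hb hab => ?_⟩
  have hmem : a • x + b • y ∈ s := hf.1 hx hy ha.le hb.le hab
  rw [← h hx, ← h hy, ← h hmem]
  exact hf.2 hx hy hxy ha hb hab

/-- Proposition 1 of the paper: strict convexity of the negative log marginal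
likelihood of the normalized latent prior mean over the open probability simplex,
assuming every marginal cell count is positive. -/
theorem hidden_neg_log_marglik_strictConvexOn
    (k M : ℕ) (hk : 1 ≤ k) (hM : 1 ≤ M)
    (β : ℝ) (hβ : 0 < β)
    (n : Fin M → Fin k → ℕ)
    (hn : ∀ x, ∃ m, 0 < n m x) :
    StrictConvexOn ℝ
      {ω : Fin k → ℝ | (∀ x, 0 < ω x) ∧ ∑ x, ω x = 1}
      (fun ω : Fin k → ℝ =>
        -∑ m, ∑ x,
          (Real.log (Real.Gamma ((n m x : ℝ) + β * ω x))
            - Real.log (Real.Gamma (β * ω x)))) := by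
  set S : Set (Fin k → ℝ) := {ω : Fin k → ℝ | (∀ x, 0 < ω x) ∧ ∑ x, ω x = 1}
  -- nice form of the function
  set f : (Fin k → ℝ) → ℝ := fun ω =>
    ∑ x, ∑ m, ∑ i ∈ Finset.range (n m x), -Real.log (β * ω x + i) with hf
  -- convexity of the set
  have hS : Convex ℝ S := by
    intro ω hω μ hμ p q hp hq hpq
    constructor
    · intro x
      rcases hp.eq_or_lt with h | h
      · simp only [← h, zero_smul, zero_add]
        have : q = 1 := by linarith
        simpa [this] using (hμ.1 x)
      · have h1 : 0 < p * ω x := mul_pos h (hω.1 x)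
        have h2 : 0 ≤ q * μ x := mul_nonneg hq (hμ.1 x).le
        simpa [Pi.add_apply, smul_eq_mul] using add_pos_of_pos_of_nonneg h1 h2
    · simp only [Pi.add_apply, Pi.smul_apply, smul_eq_mul]
      rw [Finset.sum_add_distrib, ← Finset.mul_sum, ← Finset.mul_sum, hω.2, hμ.2]
      linarith
  -- strict convexity of f on S
  have hfconv : StrictConvexOn ℝ S f := by
    refine ⟨hS, fun ω hω μ hμ hωμ p q hp hq hpq => ?_⟩
    simp only [hf, Pi.add_apply, Pi.smul_apply, smul_eq_mul]
    -- strict inequality on the sum over x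
    obtain ⟨x₀, hx₀⟩ : ∃ x, ω x ≠ μ x := by
      by_contra h
      push_neg at h
      exact hωμ (funext h)
    have hle : ∀ x ∈ Finset.univ, (∑ m, ∑ i ∈ Finset.range (n m x),
        -Real.log (β * (p * ω x + q * μ x) + i))
        ≤ p * (∑ m, ∑ i ∈ Finset.range (n m x), -Real.log (β * ω x + i))
          + q * (∑ m, ∑ i ∈ Finset.range (n m x), -Real.log (β * μ x + i)) := by
      intro x _
      by_cases hx : ω x = μ x
      · rw [hx]
        have : p * μ x + q * μ x = μ x := by linear_combination (μ x) * hpq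
        rw [this, ← add_mul, hpq, one_mul]
      · rw [Finset.mul_sum, Finset.mul_sum, ← Finset.sum_add_distrib]
        refine Finset.sum_le_sum fun m _ => ?_
        rw [Finset.mul_sum, Finset.mul_sum, ← Finset.sum_add_distrib]
        exact Finset.sum_le_sum fun i _ =>
          (term_strict hβ i (hω.1 x) (hμ.1 x) hx hp hq hpq).le
    have hlt : (∑ m, ∑ i ∈ Finset.range (n m x₀),
        -Real.log (β * (p * ω x₀ + q * μ x₀) + i))
        < p * (∑ m, ∑ i ∈ Finset.range (n m x₀), -Real.log (β * ω x₀ + i))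
          + q * (∑ m, ∑ i ∈ Finset.range (n m x₀), -Real.log (β * μ x₀ + i)) := by
      obtain ⟨m₀, hm₀⟩ := hn x₀
      rw [Finset.mul_sum, Finset.mul_sum, ← Finset.sum_add_distrib]
      refine Finset.sum_lt_sum (fun m _ => ?_) ⟨m₀, Finset.mem_univ m₀, ?_⟩
      · rw [Finset.mul_sum, Finset.mul_sum, ← Finset.sum_add_distrib]
        exact Finset.sum_le_sum fun i _ =>
          (term_strict hβ i (hω.1 x₀) (hμ.1 x₀) hx₀ hp hq hpq).le
      · rw [Finset.mul_sum, Finset.mul_sum, ← Finset.sum_add_distrib]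
        refine Finset.sum_lt_sum_of_nonempty ⟨0, Finset.mem_range.2 hm₀⟩
          fun i _ => term_strict hβ i (hω.1 x₀) (hμ.1 x₀) hx₀ hp hq hpq
    calc ∑ x, ∑ m, ∑ i ∈ Finset.range (n m x),
          -Real.log (β * (p * ω x + q * μ x) + i)
        < ∑ x, (p * (∑ m, ∑ i ∈ Finset.range (n m x), -Real.log (β * ω x + i))
            + q * (∑ m, ∑ i ∈ Finset.range (n m x), -Real.log (β * μ x + i))) :=
          Finset.sum_lt_sum hle ⟨x₀, Finset.mem_univ x₀, hlt⟩
      _ = p * f ω + q * f μ := by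
          rw [Finset.sum_add_distrib, ← Finset.mul_sum, ← Finset.mul_sum]
  -- the two functions agree on S
  refine strictConvexOn_congr hfconv fun ω hω => ?_
  have key : ∀ m x, Real.log (Real.Gamma ((n m x : ℝ) + β * ω x))
      - Real.log (Real.Gamma (β * ω x))
      = ∑ i ∈ Finset.range (n m x), Real.log (β * ω x + i) :=
    fun m x => logGamma_shift _ (mul_pos hβ (hω.1 x)) _
  simp only [hf]
  have h1 : (∑ x, ∑ m, ∑ i ∈ Finset.range (n m x), -Real.log (β * ω x + i))
      = -∑ m, ∑ x, ∑ i ∈ Finset.range (n m x), Real.log (β * ω x + i) := by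
    rw [Finset.sum_comm]
    simp [Finset.sum_neg_distrib]
  rw [h1]
  congr 1
  exact Finset.sum_congr rfl fun m _ => Finset.sum_congr rfl fun x _ => (key m x).symm
end
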